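/- arXiv:1208.3917 — 4 statements merged into one kernel-verified Lean document; each statement's English description precedes it below -/
import Mathlib

section
/- The group generated by f(x,y,z) = (x+1,y,z) and g(x,y,z) = (-x,y+1,-z) acting on ℝ³ acts freely: no nontrivial element of the group generated by f and g has a fixed point in ℝ³. -/
noncomputable def f : Equiv.Perm (ℝ × ℝ × ℝ) where
  toFun := fun p => (p.1 + 1, p.2.1, p.2.2)
  invFun := fun p => (p.1 - 1, p.2.1, p.2.2)
  left_inv := fun p => by simp
  right_inv := fun p => by simp

noncomputable def g : Equiv.Perm (ℝ × ℝ × ℝ) where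
  toFun := fun p => (-p.1, p.2.1 + 1, -p.2.2)
  invFun := fun p => (-p.1, p.2.1 - 1, -p.2.2)
  left_inv := fun p => by simp
  right_inv := fun p => by simp

/-!
Every element of the group generated by `f` and `g` is a screw motion
`(x, y, z) ↦ ((-1)ⁿ x + a, y + n, (-1)ⁿ z)` about the `y`-axis, with `n : ℤ`, `a : ℝ`, since
these maps are closed under composition and inversion. A fixed point forces `n = 0` from the
second coordinate, and then `a = 0` from the first, so the element is the identity.
-/

noncomputable def screw (n : ℤ) (a : ℝ) (p : ℝ × ℝ × ℝ) : ℝ × ℝ × ℝ :=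
  ((-1) ^ n * p.1 + a, p.2.1 + n, (-1) ^ n * p.2.2)

lemma screw_comp_screw (m n : ℤ) (a b : ℝ) :
    screw m a ∘ screw n b = screw (m + n) ((-1) ^ m * b + a) := by
  ext p <;> simp only [screw, Function.comp_apply, zpow_add₀ (neg_ne_zero.2 (one_ne_zero' ℝ)),
    Int.cast_add] <;> ring

lemma screw_zero_zero : screw 0 0 = id := by
  ext p <;> simp [screw]

lemma screw_comp_screw_inv (n : ℤ) (a : ℝ) : screw n a ∘ screw (-n) (-((-1) ^ n)⁻¹ * a) = id := by
  rw [screw_comp_screw, add_neg_cancel, neg_mul, mul_neg,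
    mul_inv_cancel_left₀ (zpow_ne_zero _ (neg_ne_zero.2 one_ne_zero)), neg_add_cancel,
    screw_zero_zero]

lemma eq_zero_of_screw_apply_eq_self {n : ℤ} {a : ℝ} {p : ℝ × ℝ × ℝ} (hp : screw n a p = p) :
    n = 0 ∧ a = 0 := by
  have hn : n = 0 := by simpa [screw] using congrArg (fun q => q.2.1) hp
  subst hn
  exact ⟨rfl, by simpa [screw] using congrArg Prod.fst hp⟩

noncomputable def screwSubgroup : Subgroup (Equiv.Perm (ℝ × ℝ × ℝ)) where
  carrier := {h | ∃ n a, ⇑h = screw n a}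
  one_mem' := ⟨0, 0, screw_zero_zero.symm⟩
  mul_mem' := by
    rintro h k ⟨m, a, hh⟩ ⟨n, b, hk⟩
    exact ⟨m + n, _, by rw [Equiv.Perm.coe_mul, hh, hk, screw_comp_screw]⟩
  inv_mem' := by
    rintro h ⟨n, a, hh⟩
    refine ⟨-n, -((-1) ^ n)⁻¹ * a, funext fun p => Equiv.Perm.inv_eq_iff_eq.2 ?_⟩
    rw [hh]
    exact (congrFun (screw_comp_screw_inv n a) p).symm

lemma f_mem_screwSubgroup : f ∈ screwSubgroup :=
  ⟨0, 1, funext fun p => by simp [f, screw]⟩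

lemma g_mem_screwSubgroup : g ∈ screwSubgroup :=
  ⟨1, 0, funext fun p => by simp [g, screw]⟩

lemma closure_f_g_le_screwSubgroup : Subgroup.closure {f, g} ≤ screwSubgroup :=
  (Subgroup.closure_le _).2 <|
    Set.insert_subset f_mem_screwSubgroup (Set.singleton_subset_iff.2 g_mem_screwSubgroup)

/-- The group generated by f and g acts freely on ℝ³: any element fixing a point is trivial. -/
theorem stmt1 : ∀ h ∈ Subgroup.closure ({f, g} : Set (Equiv.Perm (ℝ × ℝ × ℝ))),
    ∀ p : ℝ × ℝ × ℝ, h p = p → h = 1 := by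
  intro h hh p hp
  obtain ⟨n, a, hna⟩ := closure_f_g_le_screwSubgroup hh
  obtain ⟨rfl, rfl⟩ := eq_zero_of_screw_apply_eq_self (hna ▸ hp)
  exact Equiv.ext (congrFun (hna.trans screw_zero_zero))
end

section
/- The Klein bottle group K = ⟨a, b ∣ a²b² = 1⟩ is isomorphic to the group generated by f(x,y,z)=(x+1,y,z) and g(x,y,z)=(-x,y+1,-z), via the homomorphism sending a ↦ f g f⁻¹ and b ↦ f g⁻¹. -/
def kleinRels : Set (FreeGroup (Fin 2)) :=
  {FreeGroup.of 0 * FreeGroup.of 0 * FreeGroup.of 1 * FreeGroup.of 1}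

/-- The Klein bottle group ⟨a, b ∣ a²b² = 1⟩. -/
abbrev KleinGroup := PresentedGroup kleinRels

theorem Equiv.Perm.apply_zpow_apply_of_apply_apply_eq_add {α M : Type*} [AddCommGroup M]
    {σ : Equiv.Perm α} {π : α → M} {c : M} (h : ∀ p, π (σ p) = π p + c) (n : ℤ) (p : α) :
    π ((σ ^ n) p) = π p + n • c := by
  induction n using Int.induction_on generalizing p with
  | zero => simp
  | succ k ih =>
    rw [zpow_add_one, Equiv.Perm.mul_apply, ih, h, add_smul, one_smul]
    abel
  | pred k ih =>
    have h' : π (σ⁻¹ p) = π p - c := eq_sub_of_add_eq (by simpa using (h (σ⁻¹ p)).symm)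
    rw [zpow_sub_one, Equiv.Perm.mul_apply, ih, h', sub_smul, one_smul]
    abel

theorem Subgroup.closure_conj_pair {G : Type*} [Group G] (a b : G) :
    Subgroup.closure {a * b * a⁻¹, a} = Subgroup.closure {a, b} := by
  apply le_antisymm <;> rw [Subgroup.closure_le, Set.insert_subset_iff, Set.singleton_subset_iff]
  · have ha : a ∈ Subgroup.closure {a, b} := Subgroup.subset_closure (by simp)
    have hb : b ∈ Subgroup.closure {a, b} := Subgroup.subset_closure (by simp)
    exact ⟨mul_mem (mul_mem ha hb) (inv_mem ha), ha⟩
  · have hc : a * b * a⁻¹ ∈ Subgroup.closure {a * b * a⁻¹, a} := Subgroup.subset_closure (by simp)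
    have ha : a ∈ Subgroup.closure {a * b * a⁻¹, a} := Subgroup.subset_closure (by simp)
    refine ⟨ha, ?_⟩
    simpa [mul_assoc] using mul_mem (mul_mem (inv_mem ha) hc) ha

theorem Subgroup.exists_zpow_mul_zpow_eq_of_conj_eq_inv {G : Type*} [Group G] {a t : G}
    (hgen : Subgroup.closure {a, t} = ⊤) (hconj : a * t * a⁻¹ = t⁻¹) (x : G) :
    ∃ m n : ℤ, t ^ m * a ^ n = x := by
  have ha : a ∈ Subgroup.normalizer (Subgroup.zpowers t : Set G) := by
    rw [Subgroup.mem_normalizer_iff_map_conj_eq, MonoidHom.map_zpowers]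
    change Subgroup.zpowers (a * t * a⁻¹) = _
    rw [hconj, Subgroup.zpowers_inv]
  have ht : t ∈ Subgroup.normalizer (Subgroup.zpowers t : Set G) :=
    Subgroup.le_normalizer (Subgroup.mem_zpowers t)
  have : (Subgroup.zpowers t).Normal := by
    rw [← Subgroup.normalizer_eq_top_iff, eq_top_iff, ← hgen, Subgroup.closure_le]
    exact Set.insert_subset ha (Set.singleton_subset_iff.mpr ht)
  have hx : x ∈ Subgroup.zpowers t ⊔ Subgroup.zpowers a := by
    refine (Subgroup.closure_le _).mpr ?_ (hgen ▸ Subgroup.mem_top x)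
    exact Set.insert_subset (Subgroup.mem_sup_right (Subgroup.mem_zpowers a))
      (Set.singleton_subset_iff.mpr (Subgroup.mem_sup_left (Subgroup.mem_zpowers t)))
  obtain ⟨_, ⟨m, rfl⟩, _, ⟨n, rfl⟩, hmn⟩ := Subgroup.mem_sup_of_normal_left.mp hx
  exact ⟨m, n, hmn⟩

theorem conj_mul_eq_inv_of_mul_mul_mul_eq_one {G : Type*} [Group G] {a b : G}
    (h : a * a * b * b = 1) : a * (a * b) * a⁻¹ = (a * b)⁻¹ := by
  have hab : a * a * b = b⁻¹ := eq_inv_of_mul_eq_one_left h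
  calc a * (a * b) * a⁻¹ = (a * a * b) * a⁻¹ := by group
    _ = (a * b)⁻¹ := by rw [hab, mul_inv_rev]

namespace KleinGroup

section Lift

variable {G : Type*} [Group G] (x y : G) (h : x * x * y * y = 1)

def lift : KleinGroup →* G :=
  PresentedGroup.toGroup (f := ![x, y]) (by rintro r rfl; simpa using h)

theorem lift_of_zero : lift x y h (PresentedGroup.of 0) = x :=
  PresentedGroup.toGroup.of _

theorem lift_of_one : lift x y h (PresentedGroup.of 1) = y :=
  PresentedGroup.toGroup.of _

end Lift

theorem of_zero_mul_of_zero_mul_of_one_mul_of_one :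
    (PresentedGroup.of 0 * PresentedGroup.of 0 * PresentedGroup.of 1 * PresentedGroup.of 1 :
      KleinGroup) = 1 :=
  PresentedGroup.one_of_mem (Set.mem_singleton _)

theorem conj_of_zero_mul_of_one :
    (PresentedGroup.of 0 * (PresentedGroup.of 0 * PresentedGroup.of 1) * (PresentedGroup.of 0)⁻¹ :
      KleinGroup) = (PresentedGroup.of 0 * PresentedGroup.of 1)⁻¹ :=
  conj_mul_eq_inv_of_mul_mul_mul_eq_one of_zero_mul_of_zero_mul_of_one_mul_of_one

theorem closure_of_zero_of_zero_mul_of_one :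
    Subgroup.closure {PresentedGroup.of 0, PresentedGroup.of 0 * PresentedGroup.of 1} =
      (⊤ : Subgroup KleinGroup) := by
  rw [eq_top_iff, ← PresentedGroup.closure_range_of, Subgroup.closure_le]
  have ha : (PresentedGroup.of 0 : KleinGroup) ∈
      Subgroup.closure {PresentedGroup.of 0, PresentedGroup.of 0 * PresentedGroup.of 1} :=
    Subgroup.subset_closure (by simp)
  have hab : (PresentedGroup.of 0 * PresentedGroup.of 1 : KleinGroup) ∈
      Subgroup.closure {PresentedGroup.of 0, PresentedGroup.of 0 * PresentedGroup.of 1} :=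
    Subgroup.subset_closure (by simp)
  rintro _ ⟨i, rfl⟩
  fin_cases i
  · exact ha
  · simpa using mul_mem (inv_mem ha) hab

end KleinGroup

theorem g_mul_f_mul_g_inv : g * f * g⁻¹ = f⁻¹ :=
  Equiv.ext fun _ => by simp [f, g, Equiv.Perm.mul_apply, Equiv.Perm.inv_def]; ring

theorem fst_f_zpow_apply (m : ℤ) (p : ℝ × ℝ × ℝ) : ((f ^ m) p).1 = p.1 + m := by
  simpa using Equiv.Perm.apply_zpow_apply_of_apply_apply_eq_add (π := Prod.fst) (c := (1 : ℝ))
    (fun _ => rfl) m p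

theorem fst_snd_f_zpow_apply (m : ℤ) (p : ℝ × ℝ × ℝ) : ((f ^ m) p).2.1 = p.2.1 := by
  simpa using Equiv.Perm.apply_zpow_apply_of_apply_apply_eq_add (π := fun p => p.2.1)
    (c := (0 : ℝ)) (fun _ => (add_zero _).symm) m p

theorem fst_snd_g_zpow_apply (n : ℤ) (p : ℝ × ℝ × ℝ) : ((g ^ n) p).2.1 = p.2.1 + n := by
  simpa using Equiv.Perm.apply_zpow_apply_of_apply_apply_eq_add (π := fun p => p.2.1)
    (c := (1 : ℝ)) (fun _ => rfl) n p

theorem eq_zero_of_f_zpow_mul_g_zpow_eq_one {m n : ℤ} (h : f ^ m * g ^ n = 1) :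
    m = 0 ∧ n = 0 := by
  have hy := congrArg (fun σ : Equiv.Perm (ℝ × ℝ × ℝ) => (σ 0).2.1) h
  simp only [Equiv.Perm.mul_apply, fst_snd_f_zpow_apply, fst_snd_g_zpow_apply] at hy
  have hn : n = 0 := by simpa using hy
  subst hn
  have hx := congrArg (fun σ : Equiv.Perm (ℝ × ℝ × ℝ) => (σ 0).1) h
  simp only [zpow_zero, mul_one, fst_f_zpow_apply] at hx
  exact ⟨by simpa using hx, rfl⟩

theorem f_mul_g_mul_f_inv_sq_mul_f_mul_g_inv_sq :
    f * g * f⁻¹ * (f * g * f⁻¹) * (f * g⁻¹) * (f * g⁻¹) = 1 :=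
  calc f * g * f⁻¹ * (f * g * f⁻¹) * (f * g⁻¹) * (f * g⁻¹) = f * (g * f * g⁻¹) := by group
    _ = 1 := by rw [g_mul_f_mul_g_inv, mul_inv_cancel]

noncomputable def kleinRep : KleinGroup →* Equiv.Perm (ℝ × ℝ × ℝ) :=
  KleinGroup.lift (f * g * f⁻¹) (f * g⁻¹) f_mul_g_mul_f_inv_sq_mul_f_mul_g_inv_sq

theorem kleinRep_of_zero : kleinRep (PresentedGroup.of 0) = f * g * f⁻¹ :=
  KleinGroup.lift_of_zero _ _ f_mul_g_mul_f_inv_sq_mul_f_mul_g_inv_sq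

theorem kleinRep_of_one : kleinRep (PresentedGroup.of 1) = f * g⁻¹ :=
  KleinGroup.lift_of_one _ _ f_mul_g_mul_f_inv_sq_mul_f_mul_g_inv_sq

theorem kleinRep_of_zero_mul_of_one :
    kleinRep (PresentedGroup.of 0 * PresentedGroup.of 1) = f := by
  rw [map_mul, kleinRep_of_zero, kleinRep_of_one]
  group

theorem kleinRep_injective : Function.Injective kleinRep := by
  rw [injective_iff_map_eq_one]
  intro x hx
  obtain ⟨m, n, rfl⟩ := Subgroup.exists_zpow_mul_zpow_eq_of_conj_eq_inv
    KleinGroup.closure_of_zero_of_zero_mul_of_one KleinGroup.conj_of_zero_mul_of_one x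
  have hfg : f * (f ^ m * g ^ n) * f⁻¹ = 1 :=
    calc f * (f ^ m * g ^ n) * f⁻¹ = f ^ m * (f * g * f⁻¹) ^ n := by rw [conj_zpow]; group
      _ = 1 := by
        rw [← hx, map_mul, map_zpow, map_zpow, kleinRep_of_zero_mul_of_one, kleinRep_of_zero]
  obtain ⟨rfl, rfl⟩ := eq_zero_of_f_zpow_mul_g_zpow_eq_one (conj_eq_one_iff.mp hfg)
  group

theorem range_kleinRep : kleinRep.range = Subgroup.closure {f, g} := by
  rw [MonoidHom.range_eq_map, ← KleinGroup.closure_of_zero_of_zero_mul_of_one,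
    MonoidHom.map_closure, Set.image_pair, kleinRep_of_zero_mul_of_one, kleinRep_of_zero,
    Subgroup.closure_conj_pair]

/-- The Klein bottle group is isomorphic to ⟨f, g⟩ via a ↦ fgf⁻¹, b ↦ fg⁻¹. -/
theorem stmt3 : ∃ e : KleinGroup ≃*
    (Subgroup.closure ({f, g} : Set (Equiv.Perm (ℝ × ℝ × ℝ)))),
    ((e (PresentedGroup.of 0) : Equiv.Perm (ℝ × ℝ × ℝ)) = f * g * f⁻¹) ∧
    ((e (PresentedGroup.of 1) : Equiv.Perm (ℝ × ℝ × ℝ)) = f * g⁻¹) :=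
  ⟨(MonoidHom.ofInjective kleinRep_injective).trans (MulEquiv.subgroupCongr range_kleinRep),
    kleinRep_of_zero, kleinRep_of_one⟩
end

section
/- The quotient of the group G = ⟨a, b, t ∣ a²b², [t,ab]⟩ by the normal closure of {ab, tᵖ(ab)^q} is isomorphic to ℤ * ℤ/p, for any integers p ≥ 0 and q. -/
def rels3 : Set (FreeGroup (Fin 3)) :=
  {FreeGroup.of 0 * FreeGroup.of 0 * FreeGroup.of 1 * FreeGroup.of 1,
   FreeGroup.of 2 * (FreeGroup.of 0 * FreeGroup.of 1) * (FreeGroup.of 2)⁻¹ *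
     (FreeGroup.of 0 * FreeGroup.of 1)⁻¹}

/-- The group ⟨a, b, t ∣ a²b² = 1, [t, ab] = 1⟩, generators a = of 0, b = of 1, t = of 2. -/
abbrev GroupM := PresentedGroup rels3

/-!
Killing `ab` makes `b = a⁻¹`, so both defining relations of `GroupM` become trivial and
`tᵖ(ab)^q` reduces to `tᵖ`. The quotient is therefore `⟨a, t ∣ tᵖ⟩ = ℤ * ℤ/p`; the isomorphism
is `a ↦ 1 ∈ ℤ`, `b ↦ -1 ∈ ℤ`, `t ↦ 1 ∈ ℤ/p`, with inverse `1 ∈ ℤ ↦ a`, `1 ∈ ℤ/p ↦ t`.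
-/

open Monoid Multiplicative

section ZModPowers

variable {G : Type*} [Group G] {n : ℕ}

def zmodPowersHom (g : G) (hg : g ^ n = 1) : Multiplicative (ZMod n) →* G :=
  AddMonoidHom.toMultiplicativeLeft <|
    ZMod.lift n ⟨zmultiplesHom (Additive G) (Additive.ofMul g), by simp [← ofMul_pow, hg]⟩

@[simp]
theorem zmodPowersHom_ofAdd_one (g : G) (hg : g ^ n = 1) :
    zmodPowersHom g hg (ofAdd 1) = g := by
  simp [zmodPowersHom, ← Int.cast_one (R := ZMod n), -Int.cast_one]

theorem MonoidHom.ext_mzmod {f g : Multiplicative (ZMod n) →* G}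
    (h : f (ofAdd 1) = g (ofAdd 1)) : f = g := by
  refine MonoidHom.ext fun x => ?_
  obtain ⟨m, hm⟩ := ZMod.intCast_surjective (toAdd x)
  have hx : x = ofAdd (1 : ZMod n) ^ m := by
    apply_fun toAdd
    simp [← hm]
  rw [hx, map_zpow, map_zpow, h]

end ZModPowers

namespace GroupM

variable (p : ℕ) (q : ℤ)

def genImage : Fin 3 → Coprod (Multiplicative ℤ) (Multiplicative (ZMod p))
  | 0 => Coprod.inl (ofAdd 1)
  | 1 => Coprod.inl (ofAdd (-1))
  | 2 => Coprod.inr (ofAdd 1)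

theorem genImage_rels : ∀ r ∈ rels3, FreeGroup.lift (genImage p) r = 1 := by
  rintro r (rfl | rfl) <;>
    · simp only [map_mul, map_inv, FreeGroup.lift_apply_of, genImage, ofAdd_neg]
      group

def toCoprod : GroupM →* Coprod (Multiplicative ℤ) (Multiplicative (ZMod p)) :=
  PresentedGroup.toGroup (genImage_rels p)

theorem toCoprod_of (i : Fin 3) : toCoprod p (PresentedGroup.of i) = genImage p i :=
  PresentedGroup.toGroup.of _

theorem toCoprod_of_zero_mul_of_one :
    toCoprod p (PresentedGroup.of 0 * PresentedGroup.of 1) = 1 := by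
  rw [map_mul, toCoprod_of, toCoprod_of, genImage, genImage, ← map_mul, ← ofAdd_add,
    add_neg_cancel, ofAdd_zero, map_one]

def extraRels : Set GroupM :=
  {PresentedGroup.of 0 * PresentedGroup.of 1,
   PresentedGroup.of 2 ^ p * (PresentedGroup.of 0 * PresentedGroup.of 1) ^ q}

abbrev QuotExtra := GroupM ⧸ Subgroup.normalClosure (extraRels p q)

theorem normalClosure_extraRels_le_ker :
    Subgroup.normalClosure (extraRels p q) ≤ (toCoprod p).ker := by
  refine Subgroup.normalClosure_le_normal ?_
  rintro x (rfl | rfl)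
  · exact toCoprod_of_zero_mul_of_one p
  · rw [SetLike.mem_coe, MonoidHom.mem_ker, map_mul, map_zpow, toCoprod_of_zero_mul_of_one,
      one_zpow, mul_one, map_pow, toCoprod_of, genImage, ← map_pow, ← ofAdd_nsmul,
      nsmul_one, ZMod.natCast_self, ofAdd_zero, map_one]

def quotToCoprod : QuotExtra p q →* Coprod (Multiplicative ℤ) (Multiplicative (ZMod p)) :=
  QuotientGroup.lift _ (toCoprod p) (normalClosure_extraRels_le_ker p q)

@[simp]
theorem quotToCoprod_mk_of (i : Fin 3) :
    quotToCoprod p q (PresentedGroup.of i : GroupM) = genImage p i :=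
  toCoprod_of p i

theorem mk_of_zero_mul_mk_of_one :
    ((PresentedGroup.of 0 : GroupM) : QuotExtra p q) * (PresentedGroup.of 1 : GroupM) = 1 := by
  rw [← QuotientGroup.mk_mul, QuotientGroup.eq_one_iff]
  exact Subgroup.subset_normalClosure (Or.inl rfl)

theorem mk_of_two_pow : ((PresentedGroup.of 2 : GroupM) : QuotExtra p q) ^ p = 1 := by
  have h := (QuotientGroup.eq_one_iff (N := Subgroup.normalClosure (extraRels p q)) _).mpr
    (Subgroup.subset_normalClosure (Or.inr rfl))
  rwa [QuotientGroup.mk_mul, QuotientGroup.mk_zpow, QuotientGroup.mk_mul,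
    mk_of_zero_mul_mk_of_one, one_zpow, mul_one, QuotientGroup.mk_pow] at h

def coprodToQuot : Coprod (Multiplicative ℤ) (Multiplicative (ZMod p)) →* QuotExtra p q :=
  Coprod.lift (zpowersHom _ (PresentedGroup.of 0 : GroupM))
    (zmodPowersHom _ (mk_of_two_pow p q))

theorem coprodToQuot_comp_quotToCoprod :
    (coprodToQuot p q).comp (quotToCoprod p q) = MonoidHom.id _ := by
  refine QuotientGroup.monoidHom_ext _ (PresentedGroup.ext fun i => ?_)
  fin_cases i
  · simp [coprodToQuot, genImage]
  · simpa [coprodToQuot, genImage] using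
      (eq_inv_of_mul_eq_one_right (mk_of_zero_mul_mk_of_one p q)).symm
  · simp [coprodToQuot, genImage]

theorem quotToCoprod_comp_coprodToQuot :
    (quotToCoprod p q).comp (coprodToQuot p q) = MonoidHom.id _ := by
  refine Coprod.hom_ext (MonoidHom.ext_mint ?_) (MonoidHom.ext_mzmod ?_) <;>
    simp [coprodToQuot, genImage]

end GroupM

open GroupM in
/-- ⟨a,b,t ∣ a²b², [t,ab]⟩ modulo the normal closure of {ab, tᵖ(ab)^q} is ℤ * ℤ/p. -/
theorem stmt13 (p : ℕ) (q : ℤ) :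
    Nonempty ((GroupM ⧸ Subgroup.normalClosure
      ({PresentedGroup.of 0 * PresentedGroup.of 1,
        PresentedGroup.of 2 ^ p * (PresentedGroup.of 0 * PresentedGroup.of 1) ^ q} :
        Set GroupM)) ≃*
      Monoid.Coprod (Multiplicative ℤ) (Multiplicative (ZMod p))) :=
  ⟨MonoidHom.toMulEquiv (quotToCoprod p q) (coprodToQuot p q)
    (coprodToQuot_comp_quotToCoprod p q) (quotToCoprod_comp_coprodToQuot p q)⟩
end

section
/- The element a² = b⁻² generates the center of the Klein bottle group ⟨a, b ∣ a²b² = 1⟩, and this center is infinite cyclic. -/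
open Multiplicative SemidirectProduct Subgroup

theorem zpow_eq_ite_of_sq_eq_one {G : Type*} [Group G] {σ : G} (h : σ ^ 2 = 1) (n : ℤ) :
    σ ^ n = if Even n then 1 else σ := by
  rw [zpow_eq_zpow_emod' n h]
  rcases Int.emod_two_eq_zero_or_one n with hn | hn <;> simp [hn, Int.even_iff]

theorem semiconjBy_zpow_of_semiconjBy_inv {G : Type*} [Group G] {x y : G}
    (h : SemiconjBy y x x⁻¹) (n : ℤ) : SemiconjBy (y ^ n) x (if Even n then x else x⁻¹) := by
  have hsq : Commute (y ^ (2 : ℤ)) x := by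
    rw [zpow_two]
    exact SemiconjBy.mul_left (by simpa using h.inv_right) h
  obtain ⟨k, rfl | rfl⟩ := Int.even_or_odd' n
  · rw [if_pos (even_two_mul k), zpow_mul]
    exact hsq.zpow_left k
  · rw [if_neg (Int.not_even_two_mul_add_one k), zpow_add_one, zpow_mul]
    exact SemiconjBy.mul_left (hsq.zpow_left k).inv_right h

theorem Subgroup.comap_center_of_mulEquiv {G H : Type*} [Group G] [Group H] (e : G ≃* H) :
    (center H).comap e.toMonoidHom = center G := by
  ext g
  simpa [← SetLike.mem_coe, coe_center] using MulEquivClass.apply_mem_center_iff e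

theorem Subgroup.comap_zpowers_of_mulEquiv {G H : Type*} [Group G] [Group H] (e : G ≃* H)
    (g : G) : (zpowers (e g)).comap e.toMonoidHom = zpowers g := by
  rw [comap_equiv_eq_map_symm', MonoidHom.map_zpowers]
  simp

def inversionAction : Multiplicative ℤ →* MulAut (Multiplicative ℤ) :=
  zpowersHom _ (MulEquiv.inv _)

theorem inversionAction_apply (n m : Multiplicative ℤ) :
    inversionAction n m = if Even n.toAdd then m else m⁻¹ := by
  have h : MulEquiv.inv (Multiplicative ℤ) ^ 2 = 1 := by ext; simp [pow_two]
  simp only [inversionAction, zpowersHom_apply, zpow_eq_ite_of_sq_eq_one h]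
  split_ifs <;> rfl

abbrev KleinModel := Multiplicative ℤ ⋊[inversionAction] Multiplicative ℤ

namespace KleinModel

theorem center_eq_zpowers : center KleinModel = zpowers (inr (ofAdd 2)) := by
  ext z
  constructor
  · intro hz
    have hleft : -z.left.toAdd = z.left.toAdd := by
      simpa [inversionAction_apply] using
        congrArg (toAdd ∘ left) ((mem_center_iff.1 hz) (inr (ofAdd 1)))
    have hright : Even z.right.toAdd := by
      by_contra hodd
      have h : 1 + z.left.toAdd = z.left.toAdd - 1 := by
        simpa [inversionAction_apply, hodd, sub_eq_add_neg] using
          congrArg (toAdd ∘ left) ((mem_center_iff.1 hz) (inl (ofAdd 1)))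
      omega
    obtain ⟨k, hk⟩ := hright
    refine ⟨k, ?_⟩
    ext
    · simp only [← map_zpow, left_inr, toAdd_one]
      omega
    · simp [← map_zpow, hk, mul_two]
  · rintro ⟨k, rfl⟩
    refine zpow_mem (mem_center_iff.2 fun g => ?_) k
    ext <;> simp [inversionAction_apply, mul_comm]

def lift {G : Type*} [Group G] (x y : G) (h : SemiconjBy y x x⁻¹) : KleinModel →* G :=
  SemidirectProduct.lift (zpowersHom G x) (zpowersHom G y) fun n => by
    ext
    simp only [MonoidHom.comp_apply, MulEquiv.coe_toMonoidHom, MulAut.conj_apply,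
      zpowersHom_apply, inversionAction_apply, toAdd_ofAdd]
    rw [zpow_one, mul_inv_eq_of_eq_mul (semiconjBy_zpow_of_semiconjBy_inv h n.toAdd)]
    split_ifs <;> simp

end KleinModel

namespace KleinGroup

theorem semiconjBy_of_one_inv_of_zero_mul_of_one :
    SemiconjBy (PresentedGroup.of 1 : KleinGroup)⁻¹ (PresentedGroup.of 0 * PresentedGroup.of 1)
      (PresentedGroup.of 0 * PresentedGroup.of 1)⁻¹ := by
  set a : KleinGroup := PresentedGroup.of 0
  set b : KleinGroup := PresentedGroup.of 1
  have hrel : a * a * b * b = 1 := PresentedGroup.one_of_mem rfl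
  have hab : a * (b * b) = a⁻¹ := eq_inv_of_mul_eq_one_right (by simpa only [mul_assoc] using hrel)
  calc b⁻¹ * (a * b) = b⁻¹ * (a * (b * b)) * b⁻¹ := by group
    _ = (a * b)⁻¹ * b⁻¹ := by rw [hab]; group

def toModel : KleinGroup →* KleinModel :=
  PresentedGroup.toGroup (f := ![⟨ofAdd 1, ofAdd 1⟩, inr (ofAdd (-1))]) <| by
    rintro r rfl
    ext <;> simp [inversionAction_apply]

def equivModel : KleinGroup ≃* KleinModel :=
  MonoidHom.toMulEquiv toModel (KleinModel.lift _ _ semiconjBy_of_one_inv_of_zero_mul_of_one)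
    (PresentedGroup.ext fun i => by fin_cases i <;> simp [toModel, KleinModel.lift])
    (SemidirectProduct.hom_ext (MonoidHom.ext_mint (by ext <;> simp [toModel, KleinModel.lift]))
      (MonoidHom.ext_mint (by ext <;> simp [toModel, KleinModel.lift])))

theorem equivModel_of_zero_sq : equivModel (PresentedGroup.of 0 ^ 2) = inr (ofAdd 2) := by
  ext <;> simp [equivModel, toModel, pow_two, inversionAction_apply]

theorem center_eq_zpowers :
    center KleinGroup = zpowers (PresentedGroup.of 0 ^ 2 : KleinGroup) := by
  rw [← comap_center_of_mulEquiv equivModel, KleinModel.center_eq_zpowers,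
    ← equivModel_of_zero_sq, comap_zpowers_of_mulEquiv]

theorem equivModel_of_zero_sq_zpow (k : ℤ) :
    equivModel ((PresentedGroup.of 0 ^ 2) ^ k) = inr (ofAdd (2 * k)) := by
  rw [map_zpow, equivModel_of_zero_sq, ← map_zpow, Int.ofAdd_mul]

theorem injective_zpowersHom_of_zero_sq :
    Function.Injective (zpowersHom KleinGroup (PresentedGroup.of 0 ^ 2)) := by
  intro m n hmn
  have h := congrArg equivModel hmn
  rw [zpowersHom_apply, zpowersHom_apply, equivModel_of_zero_sq_zpow,
    equivModel_of_zero_sq_zpow] at h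
  have h' := ofAdd.injective (inr_injective h)
  exact toAdd.injective (by omega)

end KleinGroup

/-- a² generates the center of the Klein bottle group, and the center is infinite cyclic. -/
theorem stmt17 :
    Subgroup.center KleinGroup =
      Subgroup.zpowers (PresentedGroup.of 0 ^ 2 : KleinGroup) ∧
    Nonempty (Subgroup.center KleinGroup ≃* Multiplicative ℤ) :=
  ⟨KleinGroup.center_eq_zpowers,
    ⟨(MulEquiv.subgroupCongr KleinGroup.center_eq_zpowers).trans
      (MonoidHom.ofInjective KleinGroup.injective_zpowersHom_of_zero_sq).symm⟩⟩
end
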